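/- (Scalar characterization of optimal strategies.) A strategy p̄ ∈ P is minimal if and only if for every p ∈ P with V_I(p) ≠ V_I(p̄) there exists α ∈ ℝ^K_+ such that σ⁺_{V_I(p)}(α) > σ⁺_{V_I(p̄)}(α). Likewise, a strategy q̄ ∈ Q is maximal if and only if for every q ∈ Q with V_II(q) ≠ V_II(q̄) there exists β ∈ ℝ^K_+ such that σ⁻_{V_II(q)}(β) < σ⁻_{V_II(q̄)}(β). -/
import Mathlib


open Set

noncomputable section

/-- The mixed-strategy simplex in `ℝ^m`. -/
def simplex (m : ℕ) : Set (Fin m → ℝ) := {p | (∀ i, 0 ≤ p i) ∧ ∑ i, p i = 1}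

/-- Expected vector payoff `v(p,q) = Σ_i Σ_j p_i g_{ij} q_j`. -/
def payoff {K m n : ℕ} (g : Fin m → Fin n → (Fin K → ℝ)) (p : Fin m → ℝ) (q : Fin n → ℝ) :
    Fin K → ℝ := ∑ i, ∑ j, (p i * q j) • g i j

/-- `v_I(p) = {v(p,q) : q ∈ Q}`. -/
def vI {K m n : ℕ} (g : Fin m → Fin n → (Fin K → ℝ)) (p : Fin m → ℝ) : Set (Fin K → ℝ) :=
  {y | ∃ q ∈ simplex n, y = payoff g p q}

/-- `V_I(p) = v_I(p) - ℝ^K_+`. -/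
def VI {K m n : ℕ} (g : Fin m → Fin n → (Fin K → ℝ)) (p : Fin m → ℝ) : Set (Fin K → ℝ) :=
  {y | ∃ z ∈ vI g p, y ≤ z}

/-- `v_II(q) = {v(p,q) : p ∈ P}`. -/
def vII {K m n : ℕ} (g : Fin m → Fin n → (Fin K → ℝ)) (q : Fin n → ℝ) : Set (Fin K → ℝ) :=
  {y | ∃ p ∈ simplex m, y = payoff g p q}

/-- `V_II(q) = v_II(q) + ℝ^K_+`. -/
def VII {K m n : ℕ} (g : Fin m → Fin n → (Fin K → ℝ)) (q : Fin n → ℝ) : Set (Fin K → ℝ) :=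
  {y | ∃ z ∈ vII g q, z ≤ y}

/-- Maximal points of a set w.r.t. the componentwise order. -/
def maxSet {K : ℕ} (A : Set (Fin K → ℝ)) : Set (Fin K → ℝ) :=
  {z ∈ A | ∀ y ∈ A, z ≤ y → y = z}

/-- Minimal points of a set w.r.t. the componentwise order. -/
def minSet {K : ℕ} (A : Set (Fin K → ℝ)) : Set (Fin K → ℝ) :=
  {z ∈ A | ∀ y ∈ A, y ≤ z → y = z}

/-- `p̄` is a minimal strategy for player I: no `p ∈ P` with `V_I(p) ⊆ V_I(p̄)`
and `V_I(p) ≠ V_I(p̄)`. -/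
def MinimalStrat {K m n : ℕ} (g : Fin m → Fin n → (Fin K → ℝ)) (pbar : Fin m → ℝ) : Prop :=
  ∀ p ∈ simplex m, VI g p ⊆ VI g pbar → VI g p = VI g pbar

/-- `q̄` is a maximal strategy for player II: no `q ∈ Q` with `V_II(q) ⊆ V_II(q̄)`
and `V_II(q) ≠ V_II(q̄)`. -/
def MaximalStrat {K m n : ℕ} (g : Fin m → Fin n → (Fin K → ℝ)) (qbar : Fin n → ℝ) : Prop :=
  ∀ q ∈ simplex n, VII g q ⊆ VII g qbar → VII g q = VII g qbar

/-- Upper support function `σ⁺_A(α) = sup_{x ∈ A} αᵀx`, in the extended reals. -/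
def sigmaPlus {K : ℕ} (A : Set (Fin K → ℝ)) (α : Fin K → ℝ) : EReal :=
  ⨆ x ∈ A, ((∑ k, α k * x k : ℝ) : EReal)

/-- Lower support function `σ⁻_A(β) = inf_{x ∈ A} βᵀx`, in the extended reals. -/
def sigmaMinus {K : ℕ} (A : Set (Fin K → ℝ)) (β : Fin K → ℝ) : EReal :=
  ⨅ x ∈ A, ((∑ k, β k * x k : ℝ) : EReal)

/-! ### Auxiliary lemmas -/
open Pointwise

lemma clm_repr {K : ℕ} (f : (Fin K → ℝ) →L[ℝ] ℝ) (a : Fin K → ℝ) :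
    f a = ∑ k, f (Pi.single k 1) * a k := by
  have h : a = ∑ k, a k • (Pi.single k (1:ℝ) : Fin K → ℝ) := by
    ext j
    simp [Pi.single_apply, Finset.sum_apply]
  conv_lhs => rw [h]
  simp [map_sum, smul_eq_mul, mul_comm]

lemma sep_down {K : ℕ} {s : Set (Fin K → ℝ)} (hne : s.Nonempty) (hconv : Convex ℝ s)
    (hcl : IsClosed s) (hdown : ∀ ⦃y z : Fin K → ℝ⦄, z ∈ s → y ≤ z → y ∈ s)
    {x : Fin K → ℝ} (hx : x ∉ s) :
    ∃ α : Fin K → ℝ, (∀ k, 0 ≤ α k) ∧ ∃ u : ℝ,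
      (∀ a ∈ s, ∑ k, α k * a k < u) ∧ u < ∑ k, α k * x k := by
  obtain ⟨f, u, hfu, hux⟩ := geometric_hahn_banach_closed_point hconv hcl hx
  refine ⟨fun k => f (Pi.single k 1), fun k => ?_, u,
    fun a ha => by rw [← clm_repr]; exact hfu a ha, by rw [← clm_repr]; exact hux⟩
  by_contra hneg
  push_neg at hneg
  obtain ⟨z, hz⟩ := hne
  set c : ℝ := -f (Pi.single k 1) with hc
  have hcpos : 0 < c := by simp [hc]; linarith
  set t : ℝ := |u - f z| / c + 1 with ht
  have htpos : 0 ≤ t := by positivity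
  have hy : z - t • (Pi.single k (1:ℝ) : Fin K → ℝ) ∈ s := by
    refine hdown hz fun j => ?_
    simp only [Pi.sub_apply, Pi.smul_apply, smul_eq_mul]
    have : 0 ≤ t * (Pi.single k (1:ℝ) : Fin K → ℝ) j := by
      refine mul_nonneg htpos ?_
      rcases eq_or_ne k j with h | h <;> simp [Pi.single_apply, h]
    linarith
  have hfy : f (z - t • (Pi.single k (1:ℝ) : Fin K → ℝ)) = f z + t * c := by
    rw [map_sub, map_smul]
    simp [hc]; ring
  have hlt := hfu _ hy
  rw [hfy] at hlt
  have : u - f z ≤ |u - f z| := le_abs_self _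
  have htc : t * c = |u - f z| + c := by
    rw [ht]; field_simp
  nlinarith

lemma sep_up {K : ℕ} {s : Set (Fin K → ℝ)} (hne : s.Nonempty) (hconv : Convex ℝ s)
    (hcl : IsClosed s) (hup : ∀ ⦃y z : Fin K → ℝ⦄, z ∈ s → z ≤ y → y ∈ s)
    {x : Fin K → ℝ} (hx : x ∉ s) :
    ∃ β : Fin K → ℝ, (∀ k, 0 ≤ β k) ∧ ∃ u : ℝ,
      (∀ a ∈ s, u < ∑ k, β k * a k) ∧ ∑ k, β k * x k < u := by
  obtain ⟨f, u, hux, hfu⟩ := geometric_hahn_banach_point_closed hconv hcl hx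
  refine ⟨fun k => f (Pi.single k 1), fun k => ?_, u,
    fun a ha => by rw [← clm_repr]; exact hfu a ha, by rw [← clm_repr]; exact hux⟩
  by_contra hneg
  push_neg at hneg
  obtain ⟨z, hz⟩ := hne
  set c : ℝ := -f (Pi.single k 1) with hc
  have hcpos : 0 < c := by simp [hc]; linarith
  set t : ℝ := |f z - u| / c + 1 with ht
  have htpos : 0 ≤ t := by positivity
  have hy : z + t • (Pi.single k (1:ℝ) : Fin K → ℝ) ∈ s := by
    refine hup hz fun j => ?_
    simp only [Pi.add_apply, Pi.smul_apply, smul_eq_mul]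
    have : 0 ≤ t * (Pi.single k (1:ℝ) : Fin K → ℝ) j := by
      refine mul_nonneg htpos ?_
      rcases eq_or_ne k j with h | h <;> simp [Pi.single_apply, h]
    linarith
  have hfy : f (z + t • (Pi.single k (1:ℝ) : Fin K → ℝ)) = f z - t * c := by
    rw [map_add, map_smul]
    simp [hc]
  have hlt := hfu _ hy
  rw [hfy] at hlt
  have : f z - u ≤ |f z - u| := le_abs_self _
  have htc : t * c = |f z - u| + c := by
    rw [ht]; field_simp
  nlinarith

lemma isCompact_simplex (n : ℕ) : IsCompact (simplex n) := by
  have hcl : IsClosed (simplex n) := by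
    have : simplex n = (⋂ i, {p : Fin n → ℝ | 0 ≤ p i}) ∩ {p | ∑ i, p i = 1} := by
      ext p; simp [simplex]
    rw [this]
    exact IsClosed.inter
      (isClosed_iInter fun i => isClosed_le continuous_const (continuous_apply i))
      (isClosed_eq (continuous_finset_sum _ fun i _ => continuous_apply i) continuous_const)
  refine (isCompact_closedBall (0 : Fin n → ℝ) 1).of_isClosed_subset hcl ?_
  intro p hp
  simp only [Metric.mem_closedBall, dist_zero_right]
  refine pi_norm_le_iff_of_nonneg zero_le_one |>.2 fun i => ?_
  rw [Real.norm_eq_abs, abs_le]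
  constructor
  · linarith [hp.1 i]
  · calc p i ≤ ∑ j, p j := Finset.single_le_sum (fun j _ => hp.1 j) (Finset.mem_univ i)
      _ = 1 := hp.2

lemma simplex_nonempty {n : ℕ} (hn : 0 < n) : (simplex n).Nonempty := by
  refine ⟨fun _ => (n : ℝ)⁻¹, fun i => by positivity, ?_⟩
  simp [Finset.sum_const, Finset.card_univ]
  rw [mul_inv_cancel₀]
  exact_mod_cast hn.ne'

lemma convex_simplex (n : ℕ) : Convex ℝ (simplex n) := by
  intro p hp q hq a b ha hb hab
  refine ⟨fun i => add_nonneg (mul_nonneg ha (hp.1 i)) (mul_nonneg hb (hq.1 i)), ?_⟩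
  simp only [Pi.add_apply, Pi.smul_apply, smul_eq_mul]
  rw [Finset.sum_add_distrib, ← Finset.mul_sum, ← Finset.mul_sum, hp.2, hq.2]
  linarith

lemma continuous_payoff_q {K m n : ℕ} (g : Fin m → Fin n → (Fin K → ℝ)) (p : Fin m → ℝ) :
    Continuous fun q : Fin n → ℝ => payoff g p q := by
  apply continuous_finset_sum; intro i _
  apply continuous_finset_sum; intro j _
  exact ((continuous_const.mul (continuous_apply j)).smul continuous_const)

lemma continuous_payoff_p {K m n : ℕ} (g : Fin m → Fin n → (Fin K → ℝ)) (q : Fin n → ℝ) :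
    Continuous fun p : Fin m → ℝ => payoff g p q := by
  apply continuous_finset_sum; intro i _
  apply continuous_finset_sum; intro j _
  exact (((continuous_apply i).mul continuous_const).smul continuous_const)

lemma payoff_lin {K m n : ℕ} (g : Fin m → Fin n → (Fin K → ℝ)) (p : Fin m → ℝ)
    (q1 q2 : Fin n → ℝ) (a b : ℝ) :
    payoff g p (a • q1 + b • q2) = a • payoff g p q1 + b • payoff g p q2 := by
  funext k
  simp only [payoff, Finset.sum_apply, Pi.add_apply, Pi.smul_apply, smul_eq_mul]
  rw [Finset.mul_sum, Finset.mul_sum, ← Finset.sum_add_distrib]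
  refine Finset.sum_congr rfl fun i _ => ?_
  rw [Finset.mul_sum, Finset.mul_sum, ← Finset.sum_add_distrib]
  refine Finset.sum_congr rfl fun j _ => ?_
  ring

lemma payoff_lin_p {K m n : ℕ} (g : Fin m → Fin n → (Fin K → ℝ)) (q : Fin n → ℝ)
    (p1 p2 : Fin m → ℝ) (a b : ℝ) :
    payoff g (a • p1 + b • p2) q = a • payoff g p1 q + b • payoff g p2 q := by
  funext k
  simp only [payoff, Finset.sum_apply, Pi.add_apply, Pi.smul_apply, smul_eq_mul]
  rw [Finset.mul_sum, Finset.mul_sum, ← Finset.sum_add_distrib]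
  refine Finset.sum_congr rfl fun i _ => ?_
  rw [Finset.mul_sum, Finset.mul_sum, ← Finset.sum_add_distrib]
  refine Finset.sum_congr rfl fun j _ => ?_
  ring

lemma VI_nonempty {K m n : ℕ} (hn : 0 < n) (g : Fin m → Fin n → (Fin K → ℝ)) (p : Fin m → ℝ) :
    (VI g p).Nonempty := by
  obtain ⟨q, hq⟩ := simplex_nonempty hn
  exact ⟨payoff g p q, payoff g p q, ⟨q, hq, rfl⟩, le_refl _⟩

lemma VII_nonempty {K m n : ℕ} (hm : 0 < m) (g : Fin m → Fin n → (Fin K → ℝ)) (q : Fin n → ℝ) :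
    (VII g q).Nonempty := by
  obtain ⟨p, hp⟩ := simplex_nonempty hm
  exact ⟨payoff g p q, payoff g p q, ⟨p, hp, rfl⟩, le_refl _⟩

lemma convex_VI {K m n : ℕ} (g : Fin m → Fin n → (Fin K → ℝ)) (p : Fin m → ℝ) :
    Convex ℝ (VI g p) := by
  rintro y1 ⟨z1, ⟨q1, hq1, rfl⟩, hy1⟩ y2 ⟨z2, ⟨q2, hq2, rfl⟩, hy2⟩ a b ha hb hab
  refine ⟨payoff g p (a • q1 + b • q2), ⟨a • q1 + b • q2, convex_simplex n hq1 hq2 ha hb hab, rfl⟩, ?_⟩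
  rw [payoff_lin]
  intro k
  simp only [Pi.add_apply, Pi.smul_apply, smul_eq_mul]
  exact add_le_add (mul_le_mul_of_nonneg_left (hy1 k) ha) (mul_le_mul_of_nonneg_left (hy2 k) hb)

lemma convex_VII {K m n : ℕ} (g : Fin m → Fin n → (Fin K → ℝ)) (q : Fin n → ℝ) :
    Convex ℝ (VII g q) := by
  rintro y1 ⟨z1, ⟨p1, hp1, rfl⟩, hy1⟩ y2 ⟨z2, ⟨p2, hp2, rfl⟩, hy2⟩ a b ha hb hab
  refine ⟨payoff g (a • p1 + b • p2) q, ⟨a • p1 + b • p2, convex_simplex m hp1 hp2 ha hb hab, rfl⟩, ?_⟩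
  rw [payoff_lin_p]
  intro k
  simp only [Pi.add_apply, Pi.smul_apply, smul_eq_mul]
  exact add_le_add (mul_le_mul_of_nonneg_left (hy1 k) ha) (mul_le_mul_of_nonneg_left (hy2 k) hb)

lemma isClosed_VI {K m n : ℕ} (g : Fin m → Fin n → (Fin K → ℝ)) (p : Fin m → ℝ) :
    IsClosed (VI g p) := by
  have heq : VI g p = (fun q => payoff g p q) '' simplex n + {w : Fin K → ℝ | w ≤ 0} := by
    ext y
    constructor
    · rintro ⟨z, ⟨q, hq, rfl⟩, hy⟩
      exact ⟨payoff g p q, ⟨q, hq, rfl⟩, y - payoff g p q, fun k => by simpa using hy k, by module⟩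
    · rintro ⟨z, ⟨q, hq, rfl⟩, w, hw, rfl⟩
      exact ⟨payoff g p q, ⟨q, hq, rfl⟩, fun k => by have := hw k; simp at this ⊢; linarith⟩
  rw [heq]
  have hlc : IsClosed {w : Fin K → ℝ | w ≤ 0} := by
    have : {w : Fin K → ℝ | w ≤ 0} = ⋂ k, {w | w k ≤ 0} := by ext w; simp [Pi.le_def]
    rw [this]
    exact isClosed_iInter fun k => isClosed_le (continuous_apply k) continuous_const
  exact hlc.add_left_of_isCompact
    ((isCompact_simplex n).image (continuous_payoff_q g p))

lemma isClosed_VII {K m n : ℕ} (g : Fin m → Fin n → (Fin K → ℝ)) (q : Fin n → ℝ) :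
    IsClosed (VII g q) := by
  have heq : VII g q = (fun p => payoff g p q) '' simplex m + {w : Fin K → ℝ | 0 ≤ w} := by
    ext y
    constructor
    · rintro ⟨z, ⟨p, hp, rfl⟩, hy⟩
      exact ⟨payoff g p q, ⟨p, hp, rfl⟩, y - payoff g p q, fun k => by simpa using hy k, by module⟩
    · rintro ⟨z, ⟨p, hp, rfl⟩, w, hw, rfl⟩
      exact ⟨payoff g p q, ⟨p, hp, rfl⟩, fun k => by have := hw k; simp at this ⊢; linarith⟩
  rw [heq]
  have hlc : IsClosed {w : Fin K → ℝ | 0 ≤ w} := by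
    have : {w : Fin K → ℝ | 0 ≤ w} = ⋂ k, {w | 0 ≤ w k} := by ext w; simp [Pi.le_def]
    rw [this]
    exact isClosed_iInter fun k => isClosed_le continuous_const (continuous_apply k)
  exact hlc.add_left_of_isCompact
    ((isCompact_simplex m).image (continuous_payoff_p g q))

lemma VI_down {K m n : ℕ} (g : Fin m → Fin n → (Fin K → ℝ)) (p : Fin m → ℝ)
    ⦃y z : Fin K → ℝ⦄ (hz : z ∈ VI g p) (hyz : y ≤ z) : y ∈ VI g p := by
  obtain ⟨w, hw, hzw⟩ := hz
  exact ⟨w, hw, hyz.trans hzw⟩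

lemma VII_up {K m n : ℕ} (g : Fin m → Fin n → (Fin K → ℝ)) (q : Fin n → ℝ)
    ⦃y z : Fin K → ℝ⦄ (hz : z ∈ VII g q) (hzy : z ≤ y) : y ∈ VII g q := by
  obtain ⟨w, hw, hwz⟩ := hz
  exact ⟨w, hw, hwz.trans hzy⟩

lemma sigmaPlus_mono {K : ℕ} {s t : Set (Fin K → ℝ)} (h : s ⊆ t) (α : Fin K → ℝ) :
    sigmaPlus s α ≤ sigmaPlus t α :=
  iSup_le fun x => iSup_le fun hx => le_iSup₂_of_le x (h hx) le_rfl

lemma sigmaMinus_anti {K : ℕ} {s t : Set (Fin K → ℝ)} (h : s ⊆ t) (β : Fin K → ℝ) :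
    sigmaMinus t β ≤ sigmaMinus s β :=
  le_iInf fun x => le_iInf fun hx => iInf₂_le_of_le x (h hx) le_rfl

theorem stmt6 {K m n : ℕ} (hK : 0 < K) (hm : 0 < m) (hn : 0 < n)
    (g : Fin m → Fin n → (Fin K → ℝ)) :
    (∀ pbar ∈ simplex m,
      (MinimalStrat g pbar ↔
        ∀ p ∈ simplex m, VI g p ≠ VI g pbar →
          ∃ α : Fin K → ℝ, (∀ k, 0 ≤ α k) ∧
            sigmaPlus (VI g pbar) α < sigmaPlus (VI g p) α)) ∧
    (∀ qbar ∈ simplex n,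
      (MaximalStrat g qbar ↔
        ∀ q ∈ simplex n, VII g q ≠ VII g qbar →
          ∃ β : Fin K → ℝ, (∀ k, 0 ≤ β k) ∧
            sigmaMinus (VII g q) β < sigmaMinus (VII g qbar) β)) := by
  constructor
  · intro pbar _
    constructor
    · intro hmin p hp hne
      have hnsub : ¬ VI g p ⊆ VI g pbar := fun hsub => hne (hmin p hp hsub)
      obtain ⟨x, hxp, hxpb⟩ := Set.not_subset.1 hnsub
      obtain ⟨α, hα, u, hu, hux⟩ := sep_down (VI_nonempty hn g pbar) (convex_VI g pbar)
        (isClosed_VI g pbar) (VI_down g pbar) hxpb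
      refine ⟨α, hα, ?_⟩
      have h1 : sigmaPlus (VI g pbar) α ≤ (u : EReal) :=
        iSup_le fun a => iSup_le fun ha => by exact_mod_cast (hu a ha).le
      have h2 : ((∑ k, α k * x k : ℝ) : EReal) ≤ sigmaPlus (VI g p) α :=
        le_iSup₂_of_le x hxp le_rfl
      refine lt_of_le_of_lt h1 (lt_of_lt_of_le ?_ h2)
      exact_mod_cast hux
    · intro hsc p hp hsub
      by_contra hne
      obtain ⟨α, _, hlt⟩ := hsc p hp hne
      exact absurd (sigmaPlus_mono hsub α) (not_le.2 hlt)
  · intro qbar _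
    constructor
    · intro hmax q hq hne
      have hnsub : ¬ VII g q ⊆ VII g qbar := fun hsub => hne (hmax q hq hsub)
      obtain ⟨x, hxq, hxqb⟩ := Set.not_subset.1 hnsub
      obtain ⟨β, hβ, u, hu, hux⟩ := sep_up (VII_nonempty hm g qbar) (convex_VII g qbar)
        (isClosed_VII g qbar) (VII_up g qbar) hxqb
      refine ⟨β, hβ, ?_⟩
      have h1 : (u : EReal) ≤ sigmaMinus (VII g qbar) β :=
        le_iInf fun a => le_iInf fun ha => by exact_mod_cast (hu a ha).le
      have h2 : sigmaMinus (VII g q) β ≤ ((∑ k, β k * x k : ℝ) : EReal) :=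
        iInf₂_le_of_le x hxq le_rfl
      refine lt_of_le_of_lt h2 (lt_of_lt_of_le ?_ h1)
      exact_mod_cast hux
    · intro hsc q hq hsub
      by_contra hne
      obtain ⟨β, _, hlt⟩ := hsc q hq hne
      exact absurd (sigmaMinus_anti hsub β) (not_le.2 hlt)
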